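/- arXiv:1511.02094 — 5 statements merged into one kernel-verified Lean document; each statement's English description precedes it below -/
import Mathlib

section
/- Let T be a bounded linear operator on a complex Hilbert space H. Then (1/4)‖T*T + TT*‖ ≤ w(T)², where w denotes the numerical radius. -/
/-!
Write `T = A + iB` with `A = ℜ T` and `B = ℑ T` self-adjoint. Then `T*T + TT* = 2(A² + B²)`, and
since `⟪A x, x⟫ = re ⟪T x, x⟫` and `⟪B x, x⟫ = im ⟪T x, x⟫`, the norm formula for self-adjoint
operators, `‖A‖ = sup |⟪A x, x⟫|` over unit vectors, gives `‖A‖, ‖B‖ ≤ w(T)`. Hence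
`‖T*T + TT*‖ ≤ 2(‖A‖² + ‖B‖²) ≤ 4 w(T)²`.
-/

/-- The numerical radius of a bounded linear operator. -/
noncomputable def numRadius {E : Type*} [NormedAddCommGroup E] [InnerProductSpace ℂ E]
    (T : E →L[ℂ] E) : ℝ :=
  ⨆ x : {x : E // ‖x‖ = 1}, ‖(inner ℂ (T x.val) x.val : ℂ)‖

open ComplexStarModule ContinuousLinearMap

section
variable {E : Type*} [NormedAddCommGroup E] [InnerProductSpace ℂ E]

lemma numRadius_nonneg (T : E →L[ℂ] E) : 0 ≤ numRadius T :=
  Real.iSup_nonneg fun _ => norm_nonneg _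

lemma bddAbove_norm_inner_apply_self_sphere (T : E →L[ℂ] E) :
    BddAbove (Set.range fun x : {x : E // ‖x‖ = 1} => ‖(inner ℂ (T x.val) x.val : ℂ)‖) := by
  refine ⟨‖T‖, ?_⟩
  rintro _ ⟨⟨x, hx⟩, rfl⟩
  calc ‖(inner ℂ (T x) x : ℂ)‖ ≤ ‖T x‖ * ‖x‖ := norm_inner_le_norm _ _
    _ ≤ ‖T‖ * ‖x‖ * ‖x‖ := by gcongr; exact T.le_opNorm x
    _ = ‖T‖ := by rw [hx, mul_one, mul_one]

lemma norm_inner_apply_self_le_numRadius (T : E →L[ℂ] E) (x : E) :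
    ‖(inner ℂ (T x) x : ℂ)‖ ≤ numRadius T * ‖x‖ ^ 2 := by
  rcases eq_or_ne x 0 with rfl | hx
  · simp
  have hx' : ‖x‖ ≠ 0 := norm_ne_zero_iff.mpr hx
  have hu : ‖(‖x‖⁻¹ : ℂ) • x‖ = 1 := by
    rw [norm_smul, norm_inv, Complex.norm_real, norm_norm, inv_mul_cancel₀ hx']
  have h := le_ciSup (bddAbove_norm_inner_apply_self_sphere T) ⟨_, hu⟩
  simp only [map_smul, inner_smul_left, inner_smul_right, norm_mul, Complex.norm_conj,
    norm_inv, Complex.norm_real, norm_norm] at h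
  rwa [← mul_assoc, ← sq, inv_pow, inv_mul_le_iff₀ (by positivity), mul_comm] at h

lemma numRadius_smul (c : ℂ) (T : E →L[ℂ] E) : numRadius (c • T) = ‖c‖ * numRadius T := by
  simp only [numRadius, smul_apply, inner_smul_left, norm_mul, Complex.norm_conj]
  exact (Real.mul_iSup_of_nonneg (norm_nonneg c) _).symm

lemma abs_rayleighQuotient_le_numRadius (T : E →L[ℂ] E) (x : E) :
    |T.rayleighQuotient x| ≤ numRadius T := by
  rcases eq_or_ne x 0 with rfl | hx
  · simpa using numRadius_nonneg T
  rw [rayleighQuotient, reApplyInnerSelf_apply, abs_div, abs_sq,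
    div_le_iff₀ (by positivity)]
  exact (Complex.abs_re_le_norm _).trans (norm_inner_apply_self_le_numRadius T x)

end

section
variable {H : Type*} [NormedAddCommGroup H] [InnerProductSpace ℂ H] [CompleteSpace H]

lemma rayleighQuotient_realPart (T : H →L[ℂ] H) :
    (ℜ T : H →L[ℂ] H).rayleighQuotient = T.rayleighQuotient := by
  ext x
  have hstar : RCLike.re (inner ℂ (star T x) x) = RCLike.re (inner ℂ (T x) x) := by
    rw [star_eq_adjoint, adjoint_inner_left, ← inner_conj_symm, RCLike.conj_re]
  simp only [rayleighQuotient, reApplyInnerSelf_apply, realPart_apply_coe, smul_apply,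
    add_apply, RCLike.real_smul_eq_coe_smul (K := ℂ), inner_smul_left, inner_add_left,
    RCLike.conj_ofReal, map_add, RCLike.re_ofReal_mul, hstar]
  ring

lemma norm_realPart_le_numRadius (T : H →L[ℂ] H) : ‖(ℜ T : H →L[ℂ] H)‖ ≤ numRadius T := by
  rw [norm_eq_iSup_rayleighQuotient _ (ℜ T).2.isSymmetric, rayleighQuotient_realPart]
  exact ciSup_le (abs_rayleighQuotient_le_numRadius T)

lemma norm_imaginaryPart_le_numRadius (T : H →L[ℂ] H) :
    ‖(ℑ T : H →L[ℂ] H)‖ ≤ numRadius T := by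
  have h := norm_realPart_le_numRadius (Complex.I • T)
  rwa [realPart_I_smul, NegMemClass.coe_neg, norm_neg, numRadius_smul, Complex.norm_I,
    one_mul] at h

end

lemma norm_star_mul_self_add_self_mul_star_le {A : Type*} [NonUnitalNormedRing A] [StarRing A]
    [Module ℂ A] [IsScalarTower ℂ A A] [SMulCommClass ℂ A A] [StarModule ℂ A] (a : A) :
    ‖star a * a + a * star a‖ ≤ 2 * (‖(ℜ a : A)‖ ^ 2 + ‖(ℑ a : A)‖ ^ 2) := by
  rw [star_mul_self_add_self_mul_star, sq, sq]
  calc ‖2 • ((ℜ a : A) * ℜ a + ℑ a * ℑ a)‖ ≤ 2 * ‖(ℜ a : A) * ℜ a + ℑ a * ℑ a‖ := norm_nsmul_le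
    _ ≤ _ := by
      gcongr
      exact (norm_add_le _ _).trans (add_le_add (norm_mul_le _ _) (norm_mul_le _ _))

theorem stmt_4 {H : Type*} [NormedAddCommGroup H] [InnerProductSpace ℂ H] [CompleteSpace H]
    (T : H →L[ℂ] H) :
    (1 / 4 : ℝ) * ‖ContinuousLinearMap.adjoint T * T + T * ContinuousLinearMap.adjoint T‖ ≤
      numRadius T ^ 2 := by
  rw [← star_eq_adjoint]
  calc (1 / 4 : ℝ) * ‖star T * T + T * star T‖
      ≤ (1 / 4) * (2 * (‖(ℜ T : H →L[ℂ] H)‖ ^ 2 + ‖(ℑ T : H →L[ℂ] H)‖ ^ 2)) := by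
        gcongr; exact norm_star_mul_self_add_self_mul_star_le T
    _ ≤ (1 / 4) * (2 * (numRadius T ^ 2 + numRadius T ^ 2)) := by
        gcongr
        · exact norm_realPart_le_numRadius T
        · exact norm_imaginaryPart_le_numRadius T
    _ = numRadius T ^ 2 := by ring
end

section
/- Let T be a bounded linear operator on a complex Hilbert space H. Then w(T)² ≤ (1/2)‖T*T + TT*‖, where w denotes the numerical radius. -/
open RCLike
open scoped InnerProductSpace InnerProduct

namespace ContinuousLinearMap

variable {𝕜 E : Type*} [RCLike 𝕜] [NormedAddCommGroup E] [InnerProductSpace 𝕜 E] [CompleteSpace E]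

theorem norm_inner_apply_self_le_norm_adjoint_apply (T : E →L[𝕜] E) (x : E) :
    ‖⟪T x, x⟫_𝕜‖ ≤ ‖x‖ * ‖(T†) x‖ := by
  rw [← adjoint_inner_right]
  exact norm_inner_le_norm _ _

theorem re_inner_adjoint_mul_add_mul_adjoint_apply (T : E →L[𝕜] E) (x : E) :
    re ⟪(T† * T + T * T†) x, x⟫_𝕜 = ‖T x‖ ^ 2 + ‖(T†) x‖ ^ 2 := by
  rw [apply_norm_sq_eq_inner_adjoint_left, apply_norm_sq_eq_inner_adjoint_left, adjoint_adjoint,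
    add_apply, inner_add_left, map_add]
  rfl

theorem norm_inner_apply_self_sq_le (T : E →L[𝕜] E) (x : E) :
    ‖⟪T x, x⟫_𝕜‖ ^ 2 ≤ 1 / 2 * ‖T† * T + T * T†‖ * ‖x‖ ^ 4 := by
  set S := T† * T + T * T†
  have hT : ‖⟪T x, x⟫_𝕜‖ ≤ ‖T x‖ * ‖x‖ := norm_inner_le_norm _ _
  have hT_adj := norm_inner_apply_self_le_norm_adjoint_apply T x
  have hS : re ⟪S x, x⟫_𝕜 ≤ ‖S‖ * ‖x‖ ^ 2 :=
    calc re ⟪S x, x⟫_𝕜 ≤ ‖S x‖ * ‖x‖ := re_inner_le_norm _ _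
      _ ≤ ‖S‖ * ‖x‖ * ‖x‖ := by gcongr; exact S.le_opNorm x
      _ = ‖S‖ * ‖x‖ ^ 2 := by ring
  rw [re_inner_adjoint_mul_add_mul_adjoint_apply] at hS
  calc ‖⟪T x, x⟫_𝕜‖ ^ 2 ≤ (‖T x‖ * ‖x‖) * (‖x‖ * ‖(T†) x‖) :=
        pow_two (‖⟪T x, x⟫_𝕜‖) ▸ mul_le_mul hT hT_adj (norm_nonneg _) (by positivity)
    _ ≤ (‖T x‖ ^ 2 + ‖(T†) x‖ ^ 2) / 2 * ‖x‖ ^ 2 := by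
        nlinarith [sq_nonneg (‖T x‖ - ‖(T†) x‖), sq_nonneg ‖x‖]
    _ ≤ 1 / 2 * ‖S‖ * ‖x‖ ^ 4 := by nlinarith [sq_nonneg ‖x‖]

end ContinuousLinearMap

theorem numRadius_le {E : Type*} [NormedAddCommGroup E] [InnerProductSpace ℂ E]
    (T : E →L[ℂ] E) {c : ℝ} (hc : 0 ≤ c) (h : ∀ x : E, ‖x‖ = 1 → ‖⟪T x, x⟫_ℂ‖ ≤ c) :
    numRadius T ≤ c :=
  Real.iSup_le (fun x => h x.val x.property) hc

theorem stmt_5 {H : Type*} [NormedAddCommGroup H] [InnerProductSpace ℂ H] [CompleteSpace H]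
    (T : H →L[ℂ] H) :
    numRadius T ^ 2 ≤
      (1 / 2 : ℝ) * ‖ContinuousLinearMap.adjoint T * T + T * ContinuousLinearMap.adjoint T‖ := by
  set c := (1 / 2 : ℝ) * ‖T† * T + T * T†‖
  have hc : 0 ≤ c := by positivity
  have hw : numRadius T ≤ √c := numRadius_le T (Real.sqrt_nonneg c) fun x hx => by
    have := T.norm_inner_apply_self_sq_le x
    rw [hx, one_pow, mul_one] at this
    exact Real.le_sqrt_of_sq_le this
  calc numRadius T ^ 2 ≤ √c ^ 2 := pow_le_pow_left₀ (Real.iSup_nonneg fun _ => norm_nonneg _) hw 2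
    _ = c := Real.sq_sqrt hc
end

section
/- Let T = H₀ + iK₀ be the Cartesian decomposition of a bounded linear operator T on a complex Hilbert space H, and let α, β be real numbers with α² + β² = 1. Then ‖αH₀ + βK₀‖² ≤ ‖H₀² + K₀²‖ = (1/2)‖T*T + TT*‖. -/
set_option maxHeartbeats 1000000 in
open ContinuousLinearMap in
theorem stmt_6 {H : Type*} [NormedAddCommGroup H] [InnerProductSpace ℂ H] [CompleteSpace H]
    (T H₀ K₀ : H →L[ℂ] H)
    (hH : H₀ = (2 : ℂ)⁻¹ • (T + ContinuousLinearMap.adjoint T))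
    (hK : K₀ = (2 * Complex.I)⁻¹ • (T - ContinuousLinearMap.adjoint T))
    (α β : ℝ) (hαβ : α ^ 2 + β ^ 2 = 1) :
    ‖(α : ℂ) • H₀ + (β : ℂ) • K₀‖ ^ 2 ≤ ‖H₀ ^ 2 + K₀ ^ 2‖ ∧
      ‖H₀ ^ 2 + K₀ ^ 2‖ =
        (1 / 2 : ℝ) * ‖ContinuousLinearMap.adjoint T * T + T * ContinuousLinearMap.adjoint T‖ := by
  have hab : ((α:ℂ) ^ 2 + (β:ℂ) ^ 2) = 1 := by exact_mod_cast hαβ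
  have hH' : IsSelfAdjoint H₀ := by
    simp only [IsSelfAdjoint, hH, star_smul, star_add, star_eq_adjoint,
      ContinuousLinearMap.adjoint_adjoint]
    simp [add_comm]
  have hK' : IsSelfAdjoint K₀ := by
    simp only [IsSelfAdjoint, hK, star_smul, star_sub, star_eq_adjoint,
      ContinuousLinearMap.adjoint_adjoint]
    rw [show (star (2 * Complex.I)⁻¹ : ℂ) = -(2*Complex.I)⁻¹ by
      simp [star_inv₀]]
    module
  set A := (α : ℂ) • H₀ + (β : ℂ) • K₀ with hA
  set B := (β : ℂ) • H₀ - (α : ℂ) • K₀ with hB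
  have hA' : IsSelfAdjoint A := by
    rw [hA, IsSelfAdjoint, star_add, star_smul, star_smul, hH'.star_eq, hK'.star_eq]
    simp [Complex.conj_ofReal]
  have hB' : IsSelfAdjoint B := by
    rw [hB, IsSelfAdjoint, star_sub, star_smul, star_smul, hH'.star_eq, hK'.star_eq]
    simp [Complex.conj_ofReal]
  have key : A ^ 2 + B ^ 2 = H₀ ^ 2 + K₀ ^ 2 := by
    rw [hA, hB]
    simp only [pow_two, add_mul, mul_add, sub_mul, mul_sub, smul_mul_assoc, mul_smul_comm,
      smul_smul]
    match_scalars <;> first | linear_combination hab | linear_combination -hab | ring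
  have h1 : ‖A‖ ^ 2 ≤ ‖H₀ ^ 2 + K₀ ^ 2‖ := by
    have hns := CStarRing.norm_star_mul_self (x := A)
    rw [hA'.star_eq] at hns
    have : ‖A‖ ^ 2 = ‖A ^ 2‖ := by rw [sq, sq]; exact hns.symm
    rw [this, ← key]
    refine CStarAlgebra.norm_le_norm_of_nonneg_of_le ?_ ?_
    · rw [pow_two]; nth_rw 1 [← hA'.star_eq]; exact star_mul_self_nonneg A
    · nth_rw 1 [(add_zero (A ^ 2)).symm]
      gcongr
      rw [pow_two]; nth_rw 1 [← hB'.star_eq]; exact star_mul_self_nonneg B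
  refine ⟨h1, ?_⟩
  have key2 : H₀ ^ 2 + K₀ ^ 2 = (2:ℂ)⁻¹ • (ContinuousLinearMap.adjoint T * T + T * ContinuousLinearMap.adjoint T) := by
    rw [hH, hK]
    simp only [pow_two, smul_mul_assoc, mul_smul_comm, smul_smul, add_mul, mul_add, sub_mul,
      mul_sub, smul_add, smul_sub]
    match_scalars <;> field_simp <;> ring_nf <;> simp [Complex.I_sq] <;> norm_num
  rw [key2, norm_smul]
  norm_num
end

section
/- Let X and Y be bounded linear operators on a complex Hilbert space H, let m > 0 be a real number, and suppose X − mI is a positive operator (i.e., X ≥ mI > 0). Then m‖Y‖ ≤ (1/2)‖YX + XY‖. -/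
/-!
Put `c = max m ‖a‖`. Then `m ≤ a ≤ c`, so `b = c - a` satisfies `0 ≤ b ≤ c - m` and hence
`‖b‖ ≤ c - m`. Since `2c • y = (y a + a y) + (b y + y b)`, taking norms gives
`2c ‖y‖ ≤ ‖y a + a y‖ + 2 (c - m) ‖y‖`, i.e. `2m ‖y‖ ≤ ‖y a + a y‖`.
-/

namespace CStarAlgebra

variable {A : Type*} [CStarAlgebra A] [PartialOrder A] [StarOrderedRing A]

lemma norm_algebraMap_sub_le {a : A} {m c : ℝ} (hmc : m ≤ c) (hma : algebraMap ℝ A m ≤ a)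
    (hac : a ≤ algebraMap ℝ A c) : ‖algebraMap ℝ A c - a‖ ≤ c - m :=
  (norm_le_iff_le_algebraMap _ (sub_nonneg.2 hmc) (sub_nonneg.2 hac)).2 <| by
    rw [map_sub]
    exact sub_le_sub_left hma _

theorem two_mul_mul_norm_le_norm_mul_add_mul {a : A} {m : ℝ} (hma : algebraMap ℝ A m ≤ a)
    (y : A) : 2 * m * ‖y‖ ≤ ‖y * a + a * y‖ := by
  have ha : IsSelfAdjoint a := by
    simpa using (IsSelfAdjoint.of_nonneg (sub_nonneg.2 hma)).add (.algebraMap A (.all m))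
  set c := max m ‖a‖
  have hc : 0 ≤ c := (norm_nonneg a).trans (le_max_right _ _)
  have hac : a ≤ algebraMap ℝ A c :=
    ha.le_algebraMap_norm_self.trans (algebraMap_mono A (le_max_right _ _))
  set b := algebraMap ℝ A c - a
  have hb : ‖b‖ ≤ c - m := norm_algebraMap_sub_le (le_max_left _ _) hma hac
  have hsplit : (2 * c) • y = (y * a + a * y) + (b * y + y * b) := by
    simp only [b, sub_mul, mul_sub, Algebra.algebraMap_eq_smul_one, smul_mul_assoc, one_mul,
      mul_smul_comm, mul_one, mul_smul, two_smul]
    abel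
  have : 2 * c * ‖y‖ ≤ ‖y * a + a * y‖ + 2 * (c - m) * ‖y‖ :=
    calc 2 * c * ‖y‖ = ‖(2 * c) • y‖ := by rw [norm_smul, Real.norm_of_nonneg (by positivity)]
      _ ≤ ‖y * a + a * y‖ + (‖b‖ * ‖y‖ + ‖y‖ * ‖b‖) := by
        rw [hsplit]
        refine (norm_add_le _ _).trans (add_le_add_right ((norm_add_le _ _).trans ?_) _)
        exact add_le_add (norm_mul_le _ _) (norm_mul_le _ _)
      _ ≤ ‖y * a + a * y‖ + 2 * (c - m) * ‖y‖ := by nlinarith [norm_nonneg y]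
  linarith

end CStarAlgebra

theorem stmt_9_general {H : Type*} [NormedAddCommGroup H] [InnerProductSpace ℂ H] [CompleteSpace H]
    (X Y : H →L[ℂ] H) (m : ℝ)
    (hX : (X - (m : ℂ) • (1 : H →L[ℂ] H)).IsPositive) :
    m * ‖Y‖ ≤ (1 / 2 : ℝ) * ‖Y * X + X * Y‖ := by
  have hmX : algebraMap ℝ (H →L[ℂ] H) m ≤ X := by
    rwa [ContinuousLinearMap.le_def, Algebra.algebraMap_eq_smul_one, ← Complex.coe_smul]
  linarith [CStarAlgebra.two_mul_mul_norm_le_norm_mul_add_mul hmX Y]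

theorem stmt_9 {H : Type*} [NormedAddCommGroup H] [InnerProductSpace ℂ H] [CompleteSpace H]
    (X Y : H →L[ℂ] H) (m : ℝ) (hm : 0 < m)
    (hX : (X - (m : ℂ) • (1 : H →L[ℂ] H)).IsPositive) :
    m * ‖Y‖ ≤ (1 / 2 : ℝ) * ‖Y * X + X * Y‖ :=
  stmt_9_general X Y m hX
end

section
/- Let A = [[1, 1],[0, 1]] and B = [[0, −1],[0, 0]] be 2×2 complex matrices, and let T be the 4×4 complex matrix given in 2×2 block form with zero diagonal blocks, (1,2)-block A, and (2,1)-block B*. Then ‖A + B‖ < 2 w(T) < ‖A‖ + ‖B‖, where ‖·‖ is the operator (spectral) norm and w is the numerical radius. -/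
open scoped Matrix

/-- The operator norm of a square complex matrix, acting on Euclidean space. -/
noncomputable def matOpNorm {n : Type*} [Fintype n] [DecidableEq n]
    (M : Matrix n n ℂ) : ℝ :=
  ‖(Matrix.toEuclideanCLM (𝕜 := ℂ) M : EuclideanSpace ℂ n →L[ℂ] EuclideanSpace ℂ n)‖

/-- The numerical radius of a square complex matrix, acting on Euclidean space. -/
noncomputable def matNumRadius {n : Type*} [Fintype n] [DecidableEq n]
    (M : Matrix n n ℂ) : ℝ :=
  numRadius (Matrix.toEuclideanCLM (𝕜 := ℂ) M : EuclideanSpace ℂ n →L[ℂ] EuclideanSpace ℂ n)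

/-!
Here `A + B = 1`, so `‖A + B‖ = 1`, while the test vector `(1, 0, 0, i)` gives
`|⟨T x, x⟩| = 2 = ‖x‖²`, hence `2 w(T) ≥ 2`. In coordinates
`|⟨T x, x⟩| ≤ |x₁||x₃| + 2 |x₁||x₄| + |x₂||x₄|`, a real quadratic form whose largest value on the
unit sphere is half the largest singular value of `!![1, 2; 0, 1]`, namely `(1 + √2) / 2`.
So `2 w(T) ≤ 1 + √2`, which is beaten by `‖A‖ + ‖B‖ ≥ ‖A‖ + 1` because `‖A (1, 1)‖² = 5` gives
`‖A‖² ≥ 5 / 2 > 2`.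
-/

open scoped ComplexConjugate InnerProductSpace
open Matrix

section NumRadius

variable {E : Type*} [NormedAddCommGroup E] [InnerProductSpace ℂ E]

lemma inner_apply_smul_self (T : E →L[ℂ] E) (r : ℝ) (x : E) :
    ⟪T ((r : ℂ) • x), (r : ℂ) • x⟫_ℂ = ((r ^ 2 : ℝ) : ℂ) * ⟪T x, x⟫_ℂ := by
  simp only [map_smul, inner_smul_left, inner_smul_right, Complex.conj_ofReal]
  push_cast
  ring

lemma numRadius_bddAbove (T : E →L[ℂ] E) :
    BddAbove (Set.range fun x : {x : E // ‖x‖ = 1} => ‖⟪T x, x⟫_ℂ‖) := by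
  refine ⟨‖T‖, ?_⟩
  rintro _ ⟨⟨x, hx⟩, rfl⟩
  calc ‖⟪T x, x⟫_ℂ‖ ≤ ‖T x‖ * ‖x‖ := norm_inner_le_norm _ _
    _ ≤ ‖T‖ * ‖x‖ * ‖x‖ := by gcongr; exact T.le_opNorm x
    _ = ‖T‖ := by rw [hx, mul_one, mul_one]

lemma norm_inner_self_le_numRadius_mul_sq (T : E →L[ℂ] E) (x : E) :
    ‖⟪T x, x⟫_ℂ‖ ≤ numRadius T * ‖x‖ ^ 2 := by
  rcases eq_or_ne x 0 with rfl | hx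
  · simp
  have hx' : ‖x‖ ≠ 0 := norm_ne_zero_iff.mpr hx
  have hunit : ‖((‖x‖⁻¹ : ℝ) : ℂ) • x‖ = 1 := by
    rw [norm_smul, Complex.norm_real, norm_inv, norm_norm, inv_mul_cancel₀ hx']
  have h := le_ciSup (numRadius_bddAbove T) ⟨_, hunit⟩
  simp only [inner_apply_smul_self, norm_mul, Complex.norm_real, inv_pow, norm_inv, norm_pow,
    norm_norm] at h
  rwa [inv_mul_le_iff₀ (by positivity), mul_comm] at h

lemma numRadius_le_of_forall [Nontrivial E] (T : E →L[ℂ] E) {c : ℝ}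
    (h : ∀ x, ‖⟪T x, x⟫_ℂ‖ ≤ c * ‖x‖ ^ 2) : numRadius T ≤ c := by
  obtain ⟨x₀, hx₀⟩ := exists_norm_eq E zero_le_one
  have : Nonempty {x : E // ‖x‖ = 1} := ⟨⟨x₀, hx₀⟩⟩
  exact ciSup_le fun x => by simpa [x.2] using h x

end NumRadius

section MatOpNorm

variable {n : Type*} [Fintype n] [DecidableEq n]

lemma matOpNorm_nonneg (M : Matrix n n ℂ) : 0 ≤ matOpNorm M :=
  norm_nonneg _

lemma matOpNorm_one [Nonempty n] : matOpNorm (1 : Matrix n n ℂ) = 1 := by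
  rw [matOpNorm, map_one, norm_one]

lemma sq_norm_toEuclideanCLM_apply_le (M : Matrix n n ℂ) (v : EuclideanSpace ℂ n) :
    ‖toEuclideanCLM (𝕜 := ℂ) M v‖ ^ 2 ≤ matOpNorm M ^ 2 * ‖v‖ ^ 2 := by
  rw [← mul_pow]
  gcongr
  exact ContinuousLinearMap.le_opNorm _ _

end MatOpNorm

lemma sqrt_two_lt_matOpNorm : √2 < matOpNorm !![(1 : ℂ), 1; 0, 1] := by
  have h := sq_norm_toEuclideanCLM_apply_le !![(1 : ℂ), 1; 0, 1] (WithLp.toLp 2 ![1, 1])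
  norm_num [EuclideanSpace.norm_sq_eq, Fin.sum_univ_two] at h
  calc √2 < √(matOpNorm !![(1 : ℂ), 1; 0, 1] ^ 2) := Real.sqrt_lt_sqrt (by norm_num) (by linarith)
    _ = _ := Real.sqrt_sq (matOpNorm_nonneg _)

lemma one_le_matOpNorm : 1 ≤ matOpNorm !![(0 : ℂ), -1; 0, 0] := by
  have h : 1 ≤ |matOpNorm !![(0 : ℂ), -1; 0, 0]| := by
    simpa [EuclideanSpace.norm_sq_eq, Fin.sum_univ_two] using
      sq_norm_toEuclideanCLM_apply_le !![(0 : ℂ), -1; 0, 0] (WithLp.toLp 2 ![0, 1])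
  rwa [abs_of_nonneg (matOpNorm_nonneg _)] at h

lemma mul_add_two_mul_mul_add_mul_le (a b c d : ℝ) :
    a * c + 2 * a * d + b * d ≤ (1 + √2) / 2 * (a ^ 2 + b ^ 2 + c ^ 2 + d ^ 2) := by
  have hs : √2 ^ 2 = 2 := Real.sq_sqrt zero_le_two
  -- AM-GM on each product, weighted so that equality holds at `(1 + √2, 1, 1, 1 + √2)`.
  have h₁ : 0 ≤ (√2 + 1) / 2 * ((√2 - 1) * a - c) ^ 2 := by positivity
  have h₂ : 0 ≤ (√2 - 1) / 2 * ((√2 + 1) * b - d) ^ 2 :=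
    mul_nonneg (by linarith [Real.one_lt_sqrt_two]) (sq_nonneg _)
  linear_combination h₁ + h₂ + sq_nonneg (a - d)
    - (a * c + b * d - (√2 - 1) / 2 * a ^ 2 - (√2 + 1) / 2 * b ^ 2) * hs

local notation "𝐓" => fromBlocks (0 : Matrix (Fin 2) (Fin 2) ℂ) !![1, 1; 0, 1] !![0, -1; 0, 0]ᴴ 0

lemma inner_toEuclideanCLM_fromBlocks_self (x : EuclideanSpace ℂ (Fin 2 ⊕ Fin 2)) :
    ⟪toEuclideanCLM (𝕜 := ℂ) 𝐓 x, x⟫_ℂ =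
      conj (x (.inr 0)) * x (.inl 0) + conj (x (.inr 1)) * x (.inl 0)
        + conj (x (.inr 1)) * x (.inl 1) - conj (x (.inl 0)) * x (.inr 1) := by
  simp only [EuclideanSpace.inner_eq_star_dotProduct, dotProduct, ofLp_toEuclideanCLM,
    Pi.star_apply, mulVec, Fintype.sum_sum_type, Fin.sum_univ_two, Fin.isValue, star_add,
    star_mul', RCLike.star_def, fromBlocks_apply₁₁, Matrix.zero_apply, map_zero, zero_mul,
    add_zero, fromBlocks_apply₁₂, of_apply, cons_val', cons_val_zero, cons_val_fin_one,
    cons_val_one, zero_add, map_one, one_mul, fromBlocks_apply₂₁, conjTranspose_apply,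
    RingHomCompTriple.comp_apply, RingHom.id_apply, fromBlocks_apply₂₂, mul_zero, neg_mul, mul_neg]
  ring

lemma one_le_matNumRadius_fromBlocks : 1 ≤ matNumRadius 𝐓 := by
  set x : EuclideanSpace ℂ (Fin 2 ⊕ Fin 2) := WithLp.toLp 2 (Sum.elim ![1, 0] ![0, Complex.I])
  have hinner : ⟪toEuclideanCLM (𝕜 := ℂ) 𝐓 x, x⟫_ℂ = -2 * Complex.I := by
    rw [inner_toEuclideanCLM_fromBlocks_self]
    simp [x, two_mul, sub_eq_add_neg]
  have hnorm : ‖x‖ ^ 2 = 2 := by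
    simp [x, EuclideanSpace.norm_sq_eq, Fintype.sum_sum_type, Fin.sum_univ_two,
      one_add_one_eq_two]
  have h := norm_inner_self_le_numRadius_mul_sq (toEuclideanCLM (𝕜 := ℂ) 𝐓) x
  rw [hinner, hnorm] at h
  norm_num at h
  exact h

lemma matNumRadius_fromBlocks_le : matNumRadius 𝐓 ≤ (1 + √2) / 2 := by
  refine numRadius_le_of_forall _ fun x => ?_
  rw [inner_toEuclideanCLM_fromBlocks_self, EuclideanSpace.norm_sq_eq, Fintype.sum_sum_type,
    Fin.sum_univ_two, Fin.sum_univ_two]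
  grw [norm_sub_le, norm_add_le, norm_add_le]
  simp only [norm_mul, Complex.norm_conj]
  linarith [mul_add_two_mul_mul_add_mul_le ‖x (.inl 0)‖ ‖x (.inl 1)‖ ‖x (.inr 0)‖ ‖x (.inr 1)‖]

theorem stmt_17 (A B : Matrix (Fin 2) (Fin 2) ℂ)
    (hA : A = !![1, 1; 0, 1]) (hB : B = !![0, -1; 0, 0])
    (T : Matrix (Fin 2 ⊕ Fin 2) (Fin 2 ⊕ Fin 2) ℂ)
    (hT : T = Matrix.fromBlocks 0 A Bᴴ 0) :
    matOpNorm (A + B) < 2 * matNumRadius T ∧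
      2 * matNumRadius T < matOpNorm A + matOpNorm B := by
  subst hA hB hT
  have hsum : !![(1 : ℂ), 1; 0, 1] + !![0, -1; 0, 0] = 1 := by
    ext i j
    fin_cases i <;> fin_cases j <;> simp
  rw [hsum, matOpNorm_one]
  constructor
  · linarith [one_le_matNumRadius_fromBlocks]
  · linarith [matNumRadius_fromBlocks_le, sqrt_two_lt_matOpNorm, one_le_matOpNorm]
end
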